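/- arXiv:1808.09738 — 3 statements merged into one kernel-verified Lean document; each statement's English description precedes it below -/
import Mathlib

section
/- Let 𝒳 be a non-trivial well-pointed coherent category in which the unique morphism X → 1 is a retraction for every X ≇ 0, and assume 𝒳 is mono-complete. Then the functor of points pt : 𝒳 → Set lifts to a faithful functor Spec : 𝒳 → Top into the category of topological spaces and continuous maps: for every object X, the closed sets of Spec X are the fixed points of the closure operator cl on the power set of pt(X), and for every morphism f : X → Y the function pt f : Spec X → Spec Y is continuous. -/
/-!
Taking for closed sets the sets `Vs S` of points lying in a subobject `S` works because
`Cg ⊣ Vs` is a Galois connection (so these sets are the fixed points of `cl` and are stable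
under intersections), `Vs` turns pullback along `f` into preimage under `pt f`, and `Vs` turns
finite joins into finite unions. The last point is the real content: pulled back along a point
`p : 1 ⟶ X` it says that `Sub(1) = {⊥, ⊤}` with `⊥ ≠ ⊤`. A subobject of `1` with non-initial
domain has a point, hence is `⊤`; and if `⊤` were the bottom of `Sub(1)`, it would be the bottom
of every `Sub(Y)`, so every mono would be invertible, every object terminal and `1` initial.
-/

open CategoryTheory CategoryTheory.Limits Opposite

universe w' w v u

namespace Paper

variable {C : Type u} [Category.{v} C]

/-- "X ≇ 0": the object `X` is not initial. -/
def NonInitial (X : C) : Prop := IsInitial X → False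

/-- The category is non-trivial: `0 ≇ 1`, i.e. no object is both initial and terminal. -/
def NonTrivialCat (C : Type u) [Category.{v} C] : Prop :=
  ∀ X : C, IsInitial X → IsTerminal X → False

section Terminal
variable (C) [HasTerminal C]

/-- The category is well-pointed: the functor of points `pt = Hom(1, -)` is faithful. -/
def WellPointed : Prop :=
  ∀ ⦃X Y : C⦄ (f g : X ⟶ Y), (∀ p : ⊤_ C ⟶ X, p ≫ f = p ≫ g) → f = g

/-- The unique morphism `X ⟶ 1` is a retraction for every `X ≇ 0`. -/
def EnoughPoints : Prop :=
  ∀ X : C, NonInitial X → Nonempty (SplitEpi (terminal.from X))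

end Terminal

/-- `b` is the bottom element of `Sub(X)`. -/
def IsBotIn {X : C} (b : Subobject X) : Prop := ∀ S : Subobject X, b ≤ S

/-- `S` is an atom of the subobject lattice `Sub(X)`. -/
def IsAtomIn {X : C} (S : Subobject X) : Prop :=
  ¬ IsBotIn S ∧ ∀ T : Subobject X, T < S → IsBotIn T

/-- `Sub(X)` is atomic: every subobject is the supremum of the atoms below it. -/
def AtomicSubobjects (X : C) : Prop :=
  ∀ S : Subobject X, IsLUB {A : Subobject X | IsAtomIn A ∧ A ≤ S} S

/-- `S` is a complemented subobject: it has a complement `T` with `S ⊓ T = ⊥`, `S ⊔ T = ⊤`. -/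
def IsComplementedSub {X : C} (S : Subobject X) : Prop :=
  ∃ T m : Subobject X, IsGLB {S, T} m ∧ IsBotIn m ∧ IsLUB {S, T} ⊤

/-- A (non-empty) filter of the Boolean center `B(X)` of `Sub(X)`. -/
structure CenterFilter (X : C) where
  carrier : Set (Subobject X)
  mem_complemented : ∀ S ∈ carrier, IsComplementedSub S
  nonempty : carrier.Nonempty
  inf_mem : ∀ S ∈ carrier, ∀ T ∈ carrier, ∀ m : Subobject X, IsGLB {S, T} m → m ∈ carrier
  mem_of_le : ∀ S ∈ carrier, ∀ T : Subobject X, IsComplementedSub T → S ≤ T → T ∈ carrier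

theorem CenterFilter.ext' {X : C} {F G : CenterFilter X} (h : F.carrier = G.carrier) : F = G := by
  cases F; cases G; cases h; rfl

/-- Filters of the Boolean center, ordered by reverse inclusion. -/
instance (X : C) : PartialOrder (CenterFilter X) where
  le F G := G.carrier ⊆ F.carrier
  le_refl _ := subset_rfl
  le_trans _ _ _ h1 h2 := fun _ hx => h1 (h2 hx)
  le_antisymm _ _ h1 h2 := CenterFilter.ext' (Set.Subset.antisymm h2 h1)

/-- An object `X` is filtral if `Sub(X)` is isomorphic, as a lattice, to the lattice of
non-empty filters of the Boolean center of `Sub(X)`. -/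
def FiltralObject (X : C) : Prop :=
  Nonempty (Subobject X ≃o CenterFilter X)

/-- A category is filtral if every object is covered by a filtral one. -/
def Filtral (C : Type u) [Category.{v} C] : Prop :=
  ∀ Y : C, ∃ (X : C) (f : X ⟶ Y), Nonempty (RegularEpi f) ∧ FiltralObject X

/-- `Sub(X)` is a complete lattice (every subset has an infimum). -/
def MonoCompleteAt (X : C) : Prop :=
  ∀ s : Set (Subobject X), ∃ m : Subobject X, IsGLB s m

/-- The category is mono-complete: every subobject poset is a complete lattice. -/
def MonoComplete (C : Type u) [Category.{v} C] : Prop := ∀ X : C, MonoCompleteAt X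

section Points
variable [HasTerminal C]

/-- `Vs S` is the set of points of `X` factoring through the subobject `S`. -/
def Vs {X : C} (S : Subobject X) : Set (⊤_ C ⟶ X) := {p | S.Factors p}

open Classical in
/-- `Cg T` is the smallest subobject of `X` through which every point in `T` factors
(defined whenever the relevant infimum exists). -/
noncomputable def Cg {X : C} (T : Set (⊤_ C ⟶ X)) : Subobject X :=
  if h : ∃ m : Subobject X, IsGLB {S : Subobject X | ∀ p ∈ T, S.Factors p} m
  then h.choose else ⊤

/-- The closure operator `cl = Vs ∘ Cg` on the power set of `pt X`. -/
noncomputable def cl {X : C} (T : Set (⊤_ C ⟶ X)) : Set (⊤_ C ⟶ X) := Vs (Cg T)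

end Points

/-- Images are stable under pullback (together with finite limits and images, this is
the definition of a regular category). -/
class StableImages (C : Type u) [Category.{v} C] [HasFiniteLimits C] [HasImages C] : Prop where
  image_pullback : ∀ {X Y Z : C} (f : X ⟶ Y) (g : Z ⟶ Y),
    (Subobject.pullback g).obj (imageSubobject f) = imageSubobject (pullback.snd f g)

/-- The extra structure of a coherent category: each `Sub(X)` has finite joins and these
are preserved by the pullback functors. -/
class CoherentJoins (C : Type u) [Category.{v} C] [HasPullbacks C] : Prop where
  exists_bot : ∀ X : C, ∃ b : Subobject X, IsBotIn b
  exists_sup : ∀ {X : C} (S T : Subobject X), ∃ U : Subobject X, IsLUB {S, T} U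
  pullback_bot : ∀ {X Y : C} (f : X ⟶ Y) (b : Subobject Y),
    IsBotIn b → IsBotIn ((Subobject.pullback f).obj b)
  pullback_sup : ∀ {X Y : C} (f : X ⟶ Y) (S T U : Subobject Y), IsLUB {S, T} U →
    IsLUB {(Subobject.pullback f).obj S, (Subobject.pullback f).obj T}
      ((Subobject.pullback f).obj U)

/-- An internal equivalence relation: a jointly-monic pair which is reflexive, symmetric and
transitive (expressed via generalised elements). -/
structure IsEquivRelPair {R X : C} (r₁ r₂ : R ⟶ X) : Prop where
  jointlyMono : ∀ {Z : C} (a b : Z ⟶ R), a ≫ r₁ = b ≫ r₁ → a ≫ r₂ = b ≫ r₂ → a = b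
  refl : ∀ {Z : C} (a : Z ⟶ X), ∃ h : Z ⟶ R, h ≫ r₁ = a ∧ h ≫ r₂ = a
  symm : ∀ {Z : C} (a b : Z ⟶ X), (∃ h : Z ⟶ R, h ≫ r₁ = a ∧ h ≫ r₂ = b) →
    ∃ h : Z ⟶ R, h ≫ r₁ = b ∧ h ≫ r₂ = a
  trans : ∀ {Z : C} (a b c : Z ⟶ X), (∃ h : Z ⟶ R, h ≫ r₁ = a ∧ h ≫ r₂ = b) →
    (∃ h : Z ⟶ R, h ≫ r₁ = b ∧ h ≫ r₂ = c) →
    ∃ h : Z ⟶ R, h ≫ r₁ = a ∧ h ≫ r₂ = c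

/-- Every internal equivalence relation is effective: it is the kernel pair of its
coequaliser. -/
def EffectiveEquivRels (C : Type u) [Category.{v} C] : Prop :=
  ∀ {R X : C} (r₁ r₂ : R ⟶ X), IsEquivRelPair r₁ r₂ →
    ∃ (Y : C) (q : X ⟶ Y) (w : r₁ ≫ q = r₂ ≫ q),
      Nonempty (IsColimit (Cofork.ofπ q w)) ∧ Nonempty (IsLimit (PullbackCone.mk r₁ r₂ w))

/-- An object is decidable if its diagonal is a complemented subobject of `X ⨯ X`. -/
def DecidableObj [HasBinaryProducts C] (X : C) : Prop :=
  ∃ (Y : C) (g : Y ⟶ X ⨯ X), Nonempty (IsColimit (BinaryCofan.mk (diag X) g))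

/-- An object is pro-decidable if it is a codirected (cofiltered) limit of decidable objects. -/
def ProDecidableObj [HasBinaryProducts C] (X : C) : Prop :=
  ∃ (J : Type v) (_ : SmallCategory J) (_ : IsCofiltered J) (D : J ⥤ C) (c : Cone D),
    (∀ j, DecidableObj (D.obj j)) ∧ Nonempty (IsLimit c) ∧ Nonempty (c.pt ≅ X)

theorem eq_top_of_factors_id {X : C} {S : Subobject X} (h : S.Factors (𝟙 X)) : S = ⊤ := by
  have : IsSplitEpi S.arrow := ⟨⟨⟨S.factorThru (𝟙 X) h, S.factorThru_arrow _ h⟩⟩⟩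
  have : IsIso S.arrow := isIso_of_mono_of_isSplitEpi _
  exact Subobject.eq_top_of_isIso_arrow S

theorem pullback_obj_eq_top_iff_factors [HasPullbacks C] {A X : C} (f : A ⟶ X)
    (S : Subobject X) : (Subobject.pullback f).obj S = ⊤ ↔ S.Factors f := by
  refine ⟨fun h => ?_, fun h => eq_top_of_factors_id ?_⟩
  · simpa using (pullback_factors_iff f S (𝟙 A)).mp (h ▸ Subobject.top_factors _)
  · exact (pullback_factors_iff f S (𝟙 A)).mpr (by simpa using h)

section Terminal

variable [HasTerminal C]

theorem eq_top_or_isBotIn_of_enoughPoints (hpt : EnoughPoints C) (V : Subobject (⊤_ C)) :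
    V = ⊤ ∨ IsBotIn V := by
  rcases isEmpty_or_nonempty (IsInitial (V : C)) with hV | ⟨⟨hinit⟩⟩
  · obtain ⟨s⟩ := hpt _ hV.elim
    left
    apply eq_top_of_factors_id
    simpa [terminal.hom_ext (s.section_ ≫ V.arrow) (𝟙 _)] using
      Subobject.factors_comp_arrow (P := V) s.section_
  · exact Or.inr fun S => Subobject.le_of_comm (hinit.to _) (hinit.hom_ext _ _)

theorem gc_cg_vs {X : C} (hX : MonoCompleteAt X) :
    GaloisConnection (Cg : Set (⊤_ C ⟶ X) → Subobject X) Vs := by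
  intro T S
  have hglb : IsGLB {S : Subobject X | ∀ p ∈ T, S.Factors p} (Cg T) := by
    have h := hX {S : Subobject X | ∀ p ∈ T, S.Factors p}
    rw [Cg, dif_pos h]
    exact h.choose_spec
  refine ⟨fun hle p hp => ?_, fun hT => hglb.1 hT⟩
  have hp' : Subobject.mk p ≤ Cg T :=
    hglb.2 fun S' hS' => Subobject.mk_le_of_comm _ (S'.factorThru_arrow p (hS' p hp))
  exact Subobject.factors_of_le p (hp'.trans hle) (Subobject.mk_factors_self p)

theorem cl_eq_self_iff {X : C} (hX : MonoCompleteAt X) {T : Set (⊤_ C ⟶ X)} :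
    cl T = T ↔ ∃ S : Subobject X, Vs S = T :=
  ⟨fun h => ⟨Cg T, h⟩, fun ⟨S, hS⟩ => hS ▸ (gc_cg_vs hX).u_l_u_eq_u S⟩

theorem cl_sInter {X : C} (hX : MonoCompleteAt X) {A : Set (Set (⊤_ C ⟶ X))}
    (hA : ∀ T ∈ A, cl T = T) : cl (⋂₀ A) = ⋂₀ A :=
  ClosureOperator.sInf_isClosed (c := (gc_cg_vs hX).closureOperator) hA

end Terminal

section Coherent

variable [HasFiniteLimits C]

theorem vs_pullback {X Y : C} (f : X ⟶ Y) (S : Subobject Y) :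
    Vs ((Subobject.pullback f).obj S) = (· ≫ f) ⁻¹' Vs S :=
  Set.ext fun p => pullback_factors_iff f S p

variable [CoherentJoins C]

theorem isIso_of_mono_of_isBotIn_top (hbot : IsBotIn (⊤ : Subobject (⊤_ C))) {A Y : C}
    (m : A ⟶ Y) [Mono m] : IsIso m := by
  have h := CoherentJoins.pullback_bot (terminal.from Y) ⊤ hbot
  rw [Subobject.pullback_top] at h
  exact (Subobject.isIso_iff_mk_eq_top m).mpr (le_antisymm le_top (h _))

theorem not_isBotIn_top_terminal (hnt : NonTrivialCat C) :
    ¬ IsBotIn (⊤ : Subobject (⊤_ C)) := by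
  intro hbot
  have isTerminal (Y : C) : IsTerminal Y := by
    have : IsIso (diag Y) := isIso_of_mono_of_isBotIn_top hbot _
    have : Mono (terminal.from Y) := isSubterminal_of_isIso_diag.mono_terminal_from
    have : IsIso (terminal.from Y) := isIso_of_mono_of_isBotIn_top hbot _
    exact terminalIsTerminal.ofIso (asIso (terminal.from Y)).symm
  exact hnt _ (IsInitial.ofUniqueHom (fun Y => (isTerminal Y).from _)
    fun Y _ => (isTerminal Y).hom_ext _ _) terminalIsTerminal

theorem not_factors_of_isBotIn (hnt : NonTrivialCat C) {X : C} {b : Subobject X}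
    (hb : IsBotIn b) (p : ⊤_ C ⟶ X) : ¬ b.Factors p := by
  intro hp
  apply not_isBotIn_top_terminal hnt
  rw [← (pullback_obj_eq_top_iff_factors p b).mpr hp]
  exact CoherentJoins.pullback_bot p b hb

theorem factors_or_factors_of_isLUB (hnt : NonTrivialCat C) (hpt : EnoughPoints C) {X : C}
    {S S' U : Subobject X} (hU : IsLUB {S, S'} U) {p : ⊤_ C ⟶ X} (hp : U.Factors p) :
    S.Factors p ∨ S'.Factors p := by
  simp only [← pullback_obj_eq_top_iff_factors p] at hp ⊢
  have hlub := CoherentJoins.pullback_sup p S S' U hU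
  rw [hp] at hlub
  rcases eq_top_or_isBotIn_of_enoughPoints hpt ((Subobject.pullback p).obj S) with h | h
  · exact Or.inl h
  rcases eq_top_or_isBotIn_of_enoughPoints hpt ((Subobject.pullback p).obj S') with h' | h'
  · exact Or.inr h'
  have hupper : (Subobject.pullback p).obj S ∈
      upperBounds {(Subobject.pullback p).obj S, (Subobject.pullback p).obj S'} := by
    rintro _ (rfl | rfl)
    exacts [le_rfl, h' _]
  exact (not_isBotIn_top_terminal hnt fun V => (hlub.2 hupper).trans (h V)).elim

theorem vs_union_of_isLUB (hnt : NonTrivialCat C) (hpt : EnoughPoints C) {X : C}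
    {S S' U : Subobject X} (hU : IsLUB {S, S'} U) : Vs S ∪ Vs S' = Vs U :=
  Set.Subset.antisymm
    (Set.union_subset (fun p => Subobject.factors_of_le p (hU.1 (by simp)))
      (fun p => Subobject.factors_of_le p (hU.1 (by simp))))
    (fun _ hp => factors_or_factors_of_isLUB hnt hpt hU hp)

theorem cl_empty (hnt : NonTrivialCat C) {X : C} (hX : MonoCompleteAt X) :
    cl (∅ : Set (⊤_ C ⟶ X)) = ∅ :=
  Set.eq_empty_of_forall_notMem fun p =>
    not_factors_of_isBotIn hnt (fun _ => (gc_cg_vs hX).l_le (Set.empty_subset _)) p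

theorem cl_union (hnt : NonTrivialCat C) (hpt : EnoughPoints C) {X : C}
    (hX : MonoCompleteAt X) {A B : Set (⊤_ C ⟶ X)} (hA : cl A = A) (hB : cl B = B) :
    cl (A ∪ B) = A ∪ B := by
  obtain ⟨S, rfl⟩ := (cl_eq_self_iff hX).mp hA
  obtain ⟨S', rfl⟩ := (cl_eq_self_iff hX).mp hB
  obtain ⟨U, hU⟩ := CoherentJoins.exists_sup S S'
  exact (cl_eq_self_iff hX).mpr ⟨U, (vs_union_of_isLUB hnt hpt hU).symm⟩

open Topology

noncomputable abbrev specTopology (hnt : NonTrivialCat C) (hpt : EnoughPoints C) {X : C}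
    (hX : MonoCompleteAt X) : TopologicalSpace (⊤_ C ⟶ X) :=
  TopologicalSpace.ofClosed {T | cl T = T} (cl_empty hnt hX) (fun _ hA => cl_sInter hX hA)
    (fun _ hA _ hB => cl_union hnt hpt hX hA hB)

theorem isClosed_specTopology_iff (hnt : NonTrivialCat C) (hpt : EnoughPoints C) {X : C}
    (hX : MonoCompleteAt X) (T : Set (⊤_ C ⟶ X)) :
    IsClosed[specTopology hnt hpt hX] T ↔ cl T = T := by
  rw [← @isOpen_compl_iff _ _ (specTopology hnt hpt hX)]
  change cl Tᶜᶜ = Tᶜᶜ ↔ _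
  rw [compl_compl]

theorem continuous_specTopology (hnt : NonTrivialCat C) (hpt : EnoughPoints C) {X Y : C}
    (hX : MonoCompleteAt X) (hY : MonoCompleteAt Y) (f : X ⟶ Y) :
    Continuous[specTopology hnt hpt hX, specTopology hnt hpt hY] (· ≫ f) := by
  refine (@continuous_iff_isClosed _ _ (specTopology hnt hpt hX) (specTopology hnt hpt hY) _).mpr
    fun T hT => ?_
  rw [isClosed_specTopology_iff] at hT ⊢
  obtain ⟨S, rfl⟩ := (cl_eq_self_iff hY).mp hT
  exact (cl_eq_self_iff hX).mpr ⟨_, vs_pullback f S⟩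

end Coherent

theorem spec_lifts_to_Top_general
    [HasFiniteLimits C] [CoherentJoins C]
    (hnt : NonTrivialCat C) (hwp : WellPointed C) (hpt : EnoughPoints C)
    (hmc : MonoComplete C) :
    ∃ t : ∀ X : C, TopologicalSpace (⊤_ C ⟶ X),
      (∀ (X : C) (T : Set (⊤_ C ⟶ X)), @IsClosed _ (t X) T ↔ cl T = T) ∧
      (∀ {X Y : C} (f : X ⟶ Y), @Continuous _ _ (t X) (t Y) fun p => p ≫ f) ∧
      (∀ {X Y : C} (f g : X ⟶ Y),
        (fun p : ⊤_ C ⟶ X => p ≫ f) = (fun p : ⊤_ C ⟶ X => p ≫ g) → f = g) :=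
  ⟨fun X => specTopology hnt hpt (hmc X), fun X => isClosed_specTopology_iff hnt hpt (hmc X),
    fun f => continuous_specTopology hnt hpt (hmc _) (hmc _) f,
    fun f g h => hwp f g (congrFun h)⟩

/-- The functor of points lifts to a faithful functor `Spec : 𝒳 → Top`: there are
topologies on the sets of points whose closed sets are the fixed points of `cl`, for which
every `pt f` is continuous; moreover the resulting functor is faithful. -/
theorem spec_lifts_to_Top
    [WellPowered.{v} C] [HasFiniteLimits C] [HasImages C] [StableImages C] [CoherentJoins C]
    (hnt : NonTrivialCat C) (hwp : WellPointed C) (hpt : EnoughPoints C)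
    (hmc : MonoComplete C) :
    ∃ t : ∀ X : C, TopologicalSpace (⊤_ C ⟶ X),
      (∀ (X : C) (T : Set (⊤_ C ⟶ X)), @IsClosed _ (t X) T ↔ cl T = T) ∧
      (∀ {X Y : C} (f : X ⟶ Y), @Continuous _ _ (t X) (t Y) fun p => p ≫ f) ∧
      (∀ {X Y : C} (f g : X ⟶ Y),
        (fun p : ⊤_ C ⟶ X => p ≫ f) = (fun p : ⊤_ C ⟶ X => p ≫ g) → f = g) :=
  spec_lifts_to_Top_general hnt hwp hpt hmc

end Paper
end

section
/- Let 𝒳 be a non-trivial well-pointed coherent category in which the unique morphism X → 1 is a retraction for every X ≇ 0. Then for every object X of 𝒳, the atoms of the subobject lattice Sub(X) are precisely the subobjects represented by points 1 → X of X. -/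
open CategoryTheory CategoryTheory.Limits Opposite

universe w' w v u

namespace Paper

variable {C : Type u} [Category.{v} C]

/-!
A subobject that is not bottom is not initial, hence has a point, and a point subobject `mk p`
has no smaller non-bottom subobject because `p` is its only point. What remains is that `mk p`
is not bottom. If it were, every subobject `A ↣ 1` would contain `p` after pulling back along
`X ⟶ 1`, so it would be all of `1`; then any two points agree (their equaliser is a subobject
of `1`), well-pointedness makes the category thin, and `1` would be initial (if some object
is initial, it is then terminal), contradicting `0 ≇ 1`.
-/

theorem isBotIn_of_isInitial {X : C} {T : Subobject X} (h : IsInitial (T : C)) : IsBotIn T :=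
  fun _ => Subobject.le_of_comm (h.to _) (h.hom_ext _ _)

theorem IsAtomIn.eq_of_le {X : C} {S T : Subobject X} (hS : IsAtomIn S) (hTS : T ≤ S)
    (hT : ¬ IsBotIn T) : T = S :=
  hTS.eq_or_lt.resolve_right fun hlt => hT (hS.2 T hlt)

theorem Subobject.mk_le_of_factors {X A : C} {S : Subobject X} {f : A ⟶ X} [Mono f]
    (h : S.Factors f) : Subobject.mk f ≤ S :=
  Subobject.mk_le_of_comm _ (S.factorThru_arrow f h)

section AtomsAndPoints

variable [HasTerminal C]

theorem exists_point_factors_of_not_isBotIn (hpt : EnoughPoints C) {X : C} {S : Subobject X}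
    (hS : ¬ IsBotIn S) : ∃ q : ⊤_ C ⟶ X, S.Factors q :=
  let ⟨s⟩ := hpt _ fun hi => hS (isBotIn_of_isInitial hi)
  ⟨s.section_ ≫ S.arrow, Subobject.factors_comp_arrow _⟩

theorem eq_of_mk_point_factors {X : C} {p q : ⊤_ C ⟶ X} (h : (Subobject.mk p).Factors q) :
    q = p := by
  obtain ⟨u, rfl⟩ := h
  exact (congrArg (· ≫ p) (terminal.hom_ext u (𝟙 (⊤_ C)))).trans (Category.id_comp p)

theorem isIso_of_mono_of_isBotIn_mk_point [HasPullbacks C] {X : C} (p : ⊤_ C ⟶ X)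
    (hb : IsBotIn (Subobject.mk p)) {A : C} (m : A ⟶ ⊤_ C) [Mono m] : IsIso m := by
  obtain ⟨k, -⟩ : (Subobject.mk (pullback.snd m (terminal.from X))).Factors p :=
    Subobject.factors_of_le p (hb _) (Subobject.mk_factors_self p)
  have : IsSplitEpi m := IsSplitEpi.mk' ⟨k ≫ pullback.fst _ _, Subsingleton.elim _ _⟩
  exact isIso_of_mono_of_isSplitEpi m

theorem isThin_of_wellPointed [HasEqualizers C] (hwp : WellPointed C)
    (hmono : ∀ (A : C) (m : A ⟶ ⊤_ C), Mono m → IsIso m) : Quiver.IsThin C := by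
  have points_eq : ∀ {Z : C} (a b : ⊤_ C ⟶ Z), a = b := fun a b =>
    have := hmono _ (equalizer.ι a b) inferInstance
    eq_of_epi_equalizer
  exact fun _ _ => ⟨fun f g => hwp f g fun _ => points_eq _ _⟩

theorem exists_mono_terminal_not_isIso [HasEqualizers C] (hnt : NonTrivialCat C)
    (hwp : WellPointed C) (hpt : EnoughPoints C) :
    ∃ (A : C) (m : A ⟶ ⊤_ C), Mono m ∧ ¬ IsIso m := by
  by_contra! hmono
  have hthin := isThin_of_wellPointed hwp hmono
  by_cases hinit : ∃ Z : C, Nonempty (IsInitial Z)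
  · obtain ⟨Z, ⟨hZ⟩⟩ := hinit
    have : IsIso (terminal.from Z) := hmono _ _ ⟨fun _ _ _ => Subsingleton.elim _ _⟩
    exact hnt Z hZ (terminalIsTerminal.ofIso (asIso (terminal.from Z)).symm)
  · have point : ∀ Z : C, ⊤_ C ⟶ Z := fun Z =>
      (hpt Z fun hZ => hinit ⟨Z, ⟨hZ⟩⟩).some.section_
    exact hnt _ (IsInitial.ofUniqueHom point fun _ _ => Subsingleton.elim _ _)
      terminalIsTerminal

variable [HasPullbacks C] [HasEqualizers C]

theorem not_isBotIn_mk_point (hnt : NonTrivialCat C) (hwp : WellPointed C)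
    (hpt : EnoughPoints C) {X : C} (p : ⊤_ C ⟶ X) : ¬ IsBotIn (Subobject.mk p) := fun hb =>
  let ⟨_, m, _, hm⟩ := exists_mono_terminal_not_isIso hnt hwp hpt
  hm (isIso_of_mono_of_isBotIn_mk_point p hb m)

theorem isAtomIn_mk_point (hnt : NonTrivialCat C) (hwp : WellPointed C) (hpt : EnoughPoints C)
    {X : C} (p : ⊤_ C ⟶ X) : IsAtomIn (Subobject.mk p) := by
  refine ⟨not_isBotIn_mk_point hnt hwp hpt p, fun T hT => by_contra fun hTbot => ?_⟩
  obtain ⟨q, hq⟩ := exists_point_factors_of_not_isBotIn hpt hTbot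
  obtain rfl : q = p := eq_of_mk_point_factors (Subobject.factors_of_le q hT.le hq)
  exact hT.not_ge (Subobject.mk_le_of_factors hq)

end AtomsAndPoints

theorem atoms_eq_points_general
    [HasFiniteLimits C]
    (hnt : NonTrivialCat C) (hwp : WellPointed C) (hpt : EnoughPoints C)
    (X : C) (S : Subobject X) :
    IsAtomIn S ↔ ∃ (p : ⊤_ C ⟶ X) (hp : Mono p), S = @Subobject.mk C _ X (⊤_ C) p hp := by
  constructor
  · intro hS
    obtain ⟨q, hq⟩ := exists_point_factors_of_not_isBotIn hpt hS.1
    exact ⟨q, inferInstance,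
      (hS.eq_of_le (Subobject.mk_le_of_factors hq) (not_isBotIn_mk_point hnt hwp hpt q)).symm⟩
  · rintro ⟨p, _, rfl⟩
    exact isAtomIn_mk_point hnt hwp hpt p

/-- The atoms of `Sub(X)` are precisely the subobjects represented by points `1 ⟶ X`. -/
theorem atoms_eq_points
    [WellPowered.{v} C] [HasFiniteLimits C] [HasImages C] [StableImages C] [CoherentJoins C]
    (hnt : NonTrivialCat C) (hwp : WellPointed C) (hpt : EnoughPoints C)
    (X : C) (S : Subobject X) :
    IsAtomIn S ↔ ∃ (p : ⊤_ C ⟶ X) (hp : Mono p), S = @Subobject.mk C _ X (⊤_ C) p hp :=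
  atoms_eq_points_general hnt hwp hpt X S

end Paper
end

section
/- Let 𝒳 be a non-trivial positive and coherent category which is well-pointed. Then for every object X of 𝒳 not isomorphic to the initial object 0, the unique morphism X → 1 is a retraction; that is, every non-initial object of 𝒳 has a point. -/
open CategoryTheory CategoryTheory.Limits Opposite

universe w' w v u

namespace Paper

variable {C : Type u} [Category.{v} C]

/-!
If `X` has no points, well-pointedness forces the two coprojections `X ⟶ X ⨿ X` to agree.
Since they are monic, `X` is then the pullback of `inl` along `inr`, which is initial
because binary coproducts are disjoint.
-/

theorem isInitial_of_coprod_inl_eq_inr {X : C} [HasBinaryCoproduct X X]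
    [BinaryCoproductDisjoint X X] (h : (coprod.inl : X ⟶ X ⨿ X) = coprod.inr) :
    Nonempty (IsInitial X) := by
  have hpb : IsPullback (𝟙 X) (𝟙 X) (coprod.inl : X ⟶ X ⨿ X) coprod.inr :=
    h ▸ IsKernelPair.id_of_mono coprod.inl
  exact ⟨IsInitial.ofBinaryCoproductDisjointOfIsLimit _ hpb.isLimit⟩

theorem WellPointed.hom_ext_of_isEmpty_points [HasTerminal C] (hwp : WellPointed C) {X Y : C}
    [IsEmpty (⊤_ C ⟶ X)] (f g : X ⟶ Y) : f = g :=
  hwp f g fun p => isEmptyElim p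

theorem WellPointed.isInitial_of_isEmpty_points [HasTerminal C] [HasBinaryCoproducts C]
    [BinaryCoproductsDisjoint C] (hwp : WellPointed C) (X : C) [IsEmpty (⊤_ C ⟶ X)] :
    Nonempty (IsInitial X) :=
  isInitial_of_coprod_inl_eq_inr (hwp.hom_ext_of_isEmpty_points _ _)

theorem positive_enoughPoints_general
    [HasFiniteLimits C]
    [HasFiniteCoproducts C] [BinaryCoproductsDisjoint C]
    (hwp : WellPointed C) :
    EnoughPoints C := by
  intro X hX
  obtain ⟨p⟩ : Nonempty (⊤_ C ⟶ X) := by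
    by_contra hempty
    have : IsEmpty (⊤_ C ⟶ X) := not_nonempty_iff.mp hempty
    exact hX (hwp.isInitial_of_isEmpty_points X).some
  exact ⟨⟨p, terminal.hom_ext _ _⟩⟩

/-- In a non-trivial well-pointed positive coherent category, every non-initial object
has a point: the unique morphism `X ⟶ 1` is a retraction. -/
theorem positive_enoughPoints
    [WellPowered.{v} C] [HasFiniteLimits C] [HasImages C] [StableImages C] [CoherentJoins C]
    [HasFiniteCoproducts C] [BinaryCoproductsDisjoint C]
    (hnt : NonTrivialCat C) (hwp : WellPointed C) :
    EnoughPoints C :=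
  positive_enoughPoints_general hwp

end Paper
end
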